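/- arXiv:1307.8303 — 2 statements merged into one kernel-verified Lean document; each statement's English description precedes it below -/
import Mathlib

section
/- Let s ≥ 1, let A be a real s×s lower-triangular matrix with positive diagonal entries a₁₁,…,a_ss, let D = diag(a₁₁,…,a_ss), let Δt > 0, w ∈ ℝˢ, j⁰ ∈ ℝ, and e = (1,…,1)ᵀ ∈ ℝˢ. For ε > 0 let J_ε be the unique solution of (ε²I + ΔtA)J = ε² j⁰ e − ΔtA w and set M_ε = Δt(ε²I + ΔtD)⁻¹D. Then there exists a constant C > 0 (depending on A, Δt, w, j⁰) such that ‖J_ε + M_ε w‖ ≤ C ε² for all ε ∈ (0, 1]. That is, with the choice M = Δt(ε²I + Δt·diag(A))⁻¹ diag(A), the explicitly treated term J + M ∂ₓR vanishes to order O(ε²) in the diffusive regime (Lemma on the optimal choice of M for type A schemes). -/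
open Matrix

/-- With the optimal choice `M_ε = Δt (ε²I + ΔtD)⁻¹ D`, the explicitly
treated term `J_ε + M_ε w` vanishes to order `O(ε²)`: there is `C > 0` with
`‖J_ε + M_ε w‖ ≤ C ε²` for all `ε ∈ (0, 1]`. -/
theorem stage_flux_optimal_M_order_eps_sq
    (s : ℕ) (hs : 1 ≤ s) (A : Matrix (Fin s) (Fin s) ℝ)
    (hLT : ∀ i j : Fin s, i < j → A i j = 0) (hdiag : ∀ i, 0 < A i i)
    (D : Matrix (Fin s) (Fin s) ℝ) (hD : D = Matrix.diagonal fun i => A i i)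
    (Δt : ℝ) (hΔt : 0 < Δt)
    (w : Fin s → ℝ) (j0 : ℝ) (e : Fin s → ℝ) (he : e = fun _ => 1)
    (J : ℝ → Fin s → ℝ)
    (hJ : ∀ ε : ℝ, 0 < ε →
      (ε ^ 2 • (1 : Matrix (Fin s) (Fin s) ℝ) + Δt • A) *ᵥ J ε
        = ε ^ 2 • (j0 • e) - Δt • (A *ᵥ w)) :
    ∃ C : ℝ, 0 < C ∧ ∀ ε ∈ Set.Ioc (0 : ℝ) 1,
      ‖J ε + (Δt • ((ε ^ 2 • (1 : Matrix (Fin s) (Fin s) ℝ) + Δt • D)⁻¹ * D)) *ᵥ w‖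
        ≤ C * ε ^ 2 := by
  subst hD he
  set B : ℝ → Matrix (Fin s) (Fin s) ℝ :=
    fun ε => ε ^ 2 • (1 : Matrix (Fin s) (Fin s) ℝ) + Δt • A with hB
  -- positivity of diagonal denominators
  have hden : ∀ (ε : ℝ) (i : Fin s), 0 < ε ^ 2 + Δt * A i i := fun ε i => by
    have h1 := mul_pos hΔt (hdiag i)
    have h2 := sq_nonneg ε
    linarith
  -- determinant of B ε is positive
  have hBT : ∀ ε : ℝ, (B ε).BlockTriangular OrderDual.toDual := by
    intro ε i j hij
    have hij' : i < j := hij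
    simp [hB, Matrix.add_apply, Matrix.smul_apply, Matrix.one_apply_ne (ne_of_lt hij'),
      hLT i j hij']
  have hdet : ∀ ε : ℝ, 0 < (B ε).det := by
    intro ε
    rw [Matrix.det_of_lowerTriangular _ (hBT ε)]
    refine Finset.prod_pos fun i _ => ?_
    simpa [hB, Matrix.add_apply, Matrix.smul_apply, Matrix.one_apply] using hden ε i
  have hdetne : ∀ ε : ℝ, (B ε).det ≠ 0 := fun ε => (hdet ε).ne'
  have hunit : ∀ ε : ℝ, IsUnit (B ε).det := fun ε => isUnit_iff_ne_zero.2 (hdetne ε)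
  -- the bounded profile f
  set f : ℝ → Fin s → ℝ := fun ε =>
    j0 • ((B ε)⁻¹ *ᵥ fun _ => (1 : ℝ)) + (B ε)⁻¹ *ᵥ w
      - fun i => (ε ^ 2 + Δt * A i i)⁻¹ * w i with hf
  -- key identity
  have hkey : ∀ ε : ℝ, 0 < ε →
      J ε + (Δt • ((ε ^ 2 • (1 : Matrix (Fin s) (Fin s) ℝ)
          + Δt • Matrix.diagonal fun i => A i i)⁻¹ * Matrix.diagonal fun i => A i i)) *ᵥ w
        = ε ^ 2 • f ε := by
    intro ε hε
    -- solve for J ε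
    have h1 : B ε *ᵥ (J ε + w) = ε ^ 2 • (j0 • fun _ => (1 : ℝ)) + ε ^ 2 • w := by
      have h0 : B ε *ᵥ w = ε ^ 2 • w + Δt • (A *ᵥ w) := by
        simp [hB, Matrix.add_mulVec, Matrix.smul_mulVec, Matrix.one_mulVec]
      rw [Matrix.mulVec_add, hJ ε hε, h0]
      abel
    have hJval : J ε + w = ε ^ 2 • (j0 • ((B ε)⁻¹ *ᵥ fun _ => (1 : ℝ)))
        + ε ^ 2 • ((B ε)⁻¹ *ᵥ w) := by
      have := congrArg (fun v => (B ε)⁻¹ *ᵥ v) h1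
      simpa [Matrix.mulVec_mulVec, Matrix.nonsing_inv_mul _ (hunit ε), Matrix.one_mulVec,
        Matrix.mulVec_add, Matrix.mulVec_smul] using this
    -- diagonal part
    have hdiagmat : (ε ^ 2 • (1 : Matrix (Fin s) (Fin s) ℝ)
        + Δt • Matrix.diagonal fun i => A i i)
        = Matrix.diagonal fun i => ε ^ 2 + Δt * A i i := by
      ext i j
      by_cases h : i = j <;>
        simp [h, Matrix.add_apply, Matrix.smul_apply, Matrix.one_apply,
          Matrix.diagonal_apply, Ne.symm]
    funext i
    have hJi : J ε i = ε ^ 2 * (j0 * ((B ε)⁻¹ *ᵥ fun _ => (1 : ℝ)) i)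
        + ε ^ 2 * ((B ε)⁻¹ *ᵥ w) i - w i := by
      have := congrFun hJval i
      simp only [Pi.add_apply, Pi.smul_apply, smul_eq_mul] at this
      linarith
    have hMi : ((Δt • ((ε ^ 2 • (1 : Matrix (Fin s) (Fin s) ℝ)
        + Δt • Matrix.diagonal fun i => A i i)⁻¹ * Matrix.diagonal fun i => A i i)) *ᵥ w) i
        = Δt * ((ε ^ 2 + Δt * A i i)⁻¹ * A i i) * w i := by
      have hdinv : (Matrix.diagonal fun i => ε ^ 2 + Δt * A i i)⁻¹
          = Matrix.diagonal fun i => (ε ^ 2 + Δt * A i i)⁻¹ := by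
        apply Matrix.inv_eq_right_inv
        rw [Matrix.diagonal_mul_diagonal]
        convert Matrix.diagonal_one using 2
        funext k
        exact mul_inv_cancel₀ (hden ε k).ne'
      rw [hdiagmat, hdinv, Matrix.diagonal_mul_diagonal]
      simp [Matrix.smul_mulVec, Matrix.mulVec_diagonal]
      ring
    simp only [Pi.add_apply, Pi.smul_apply, smul_eq_mul, hf, Pi.sub_apply]
    rw [hJi, hMi]
    have hne := (hden ε i).ne'
    field_simp
    ring
  -- continuity of f
  have hBcont : Continuous B := by
    apply Continuous.add
    · exact ((continuous_pow 2).smul continuous_const)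
    · exact continuous_const
  have hInv : Continuous fun ε => (B ε)⁻¹ := by
    rw [continuous_iff_continuousAt]
    intro ε
    have h1 : ContinuousAt Ring.inverse (B ε).det := by
      rw [Ring.inverse_eq_inv']
      exact continuousAt_inv₀ (hdetne ε)
    exact (continuousAt_matrix_inv (B ε) h1).comp hBcont.continuousAt
  have hfcont : Continuous f := by
    apply Continuous.sub
    · exact ((hInv.matrix_mulVec continuous_const).const_smul j0).add
        (hInv.matrix_mulVec continuous_const)
    · refine continuous_pi fun i => Continuous.mul ?_ continuous_const
      exact Continuous.inv₀ ((continuous_pow 2).add continuous_const)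
        fun ε => (hden ε i).ne'
  -- bound on [0,1]
  obtain ⟨x₀, -, hx₀⟩ := (isCompact_Icc (a := (0:ℝ)) (b := 1)).exists_isMaxOn
    (Set.nonempty_Icc.2 zero_le_one) (hfcont.norm.continuousOn)
  refine ⟨‖f x₀‖ + 1, by positivity, fun ε hε => ?_⟩
  rw [hkey ε hε.1, norm_smul]
  have h2 : ‖(ε ^ 2 : ℝ)‖ = ε ^ 2 := by
    rw [Real.norm_eq_abs, abs_of_nonneg (sq_nonneg ε)]
  rw [h2, mul_comm]
  apply mul_le_mul_of_nonneg_right _ (sq_nonneg ε)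
  have := hx₀ (Set.mem_Icc.2 ⟨hε.1.le, hε.2⟩)
  simp only [Set.mem_setOf_eq] at this
  linarith
end

section
/- Let s ≥ 1, let Ã, A be real s×s matrices with A invertible, b̃ ∈ ℝˢ, Δt > 0, and set g = b̃ − Ãᵀeₛ ∈ ℝˢ where eₛ is the s-th standard basis vector. Let p : ℝ → ℝ be twice differentiable, let P : Fin s → (ℝ → ℝ) be componentwise twice differentiable and Q : Fin s → (ℝ → ℝ) be componentwise differentiable (derivatives denoted '). Suppose that for all x ∈ ℝ the ε = 0 limit adjoint stage equations hold: P(x) = p(x)·eₛ + Δt·(AᵀQ)'(x) − Δt·[(ÃᵀP)''(x) − (AᵀP)''(x)] − Δt·p''(x)·g and 0 = −Δt·[(AᵀQ)(x) − (ÃᵀP)'(x)] + Δt·p'(x)·g. Define the linear variable transformation Q̄ = Δt·AᵀQ (componentwise in x). Then for all x ∈ ℝ: Q̄(x) = Δt·(ÃᵀP)'(x) + Δt·p'(x)·g and P(x) = p(x)·eₛ + Q̄'(x) − Δt·[(ÃᵀP)''(x) − (AᵀP)''(x)] − Δt·p''(x)·g, i.e. (P, Q̄) solves the adjoint system of the ε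 = 0 limit problem. Conversely, if (P, Q̄) satisfies the latter two equations for all x, then Q = (1/Δt)·(Aᵀ)⁻¹Q̄ satisfies the former two equations. (This is the variable-transformation equivalence in the Lemma on stiffly accurate type A schemes.) -/
open Matrix

/- The transformation is invertible because `Aᵀ` is: contracting `(1/Δt)(Aᵀ)⁻¹ Q̄` against the
columns of `A` returns `(1/Δt) Q̄`. Hence `Δt AᵀQ = Q̄` stage by stage, and the two systems differ
only by pulling the constant `Δt` through the derivative `(AᵀQ)'`. -/

theorem Matrix.sum_mul_eq_of_eq_const_mul_inv_transpose_mulVec {n R : Type*} [Fintype n]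
    [DecidableEq n] [CommRing R] {A : Matrix n n R} (hA : IsUnit A) (c : R) (v w : n → R)
    (hw : ∀ i, w i = c * ∑ j, (Aᵀ)⁻¹ i j * v j) (k : n) :
    ∑ i, A i k * w i = c * v k := by
  have hw_eq : w = (Aᵀ)⁻¹ *ᵥ (c • v) := by
    ext i
    rw [hw, mulVec_smul]
    rfl
  have hdet : IsUnit Aᵀ.det := by rwa [det_transpose, ← isUnit_iff_isUnit_det]
  calc ∑ i, A i k * w i = (Aᵀ *ᵥ w) k := rfl
    _ = c * v k := by rw [hw_eq, mulVec_mulVec, mul_nonsing_inv _ hdet, one_mulVec]; rfl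

theorem adjoint_variable_transformation_equiv_general
    (s : ℕ) (Δt : ℝ) (hΔt : 0 < Δt)
    (Atil A : Matrix (Fin (s + 1)) (Fin (s + 1)) ℝ) (hA : IsUnit A)
    (g : Fin (s + 1) → ℝ)
    (p : ℝ → ℝ)
    (P Q : Fin (s + 1) → ℝ → ℝ)
    (hQ : ∀ k, Differentiable ℝ (Q k)) :
    -- forward direction: `(P, Q)` solves the ε = 0 limit adjoint stage equations
    -- implies `(P, Q̄)` with `Q̄ = Δt AᵀQ` solves the adjoint system of the
    -- limiting problem
    ((∀ (x : ℝ) (k : Fin (s + 1)),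
        P k x = p x * (if k = Fin.last s then (1 : ℝ) else 0)
            + Δt * deriv (fun y => ∑ i, A i k * Q i y) x
            - Δt * (deriv (deriv (fun y => ∑ i, Atil i k * P i y)) x
                - deriv (deriv (fun y => ∑ i, A i k * P i y)) x)
            - Δt * deriv (deriv p) x * g k
        ∧ (0 : ℝ)
          = -(Δt * ((∑ i, A i k * Q i x)
                - deriv (fun y => ∑ i, Atil i k * P i y) x))
            + Δt * deriv p x * g k) →
      (∀ (x : ℝ) (k : Fin (s + 1)),
        Δt * ∑ i, A i k * Q i x
            = Δt * deriv (fun y => ∑ i, Atil i k * P i y) x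
              + Δt * deriv p x * g k
        ∧ P k x = p x * (if k = Fin.last s then (1 : ℝ) else 0)
            + deriv (fun y => Δt * ∑ i, A i k * Q i y) x
            - Δt * (deriv (deriv (fun y => ∑ i, Atil i k * P i y)) x
                - deriv (deriv (fun y => ∑ i, A i k * P i y)) x)
            - Δt * deriv (deriv p) x * g k))
    ∧
    -- converse direction: if `(P, Q̄)` solves the limiting adjoint system, then
    -- `Q = (1/Δt)(Aᵀ)⁻¹ Q̄` solves the ε = 0 limit adjoint stage equations
    (∀ Qbar : Fin (s + 1) → ℝ → ℝ, (∀ k, Differentiable ℝ (Qbar k)) →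
      (∀ (x : ℝ) (k : Fin (s + 1)),
        Qbar k x
            = Δt * deriv (fun y => ∑ i, Atil i k * P i y) x
              + Δt * deriv p x * g k
        ∧ P k x = p x * (if k = Fin.last s then (1 : ℝ) else 0)
            + deriv (fun y => Qbar k y) x
            - Δt * (deriv (deriv (fun y => ∑ i, Atil i k * P i y)) x
                - deriv (deriv (fun y => ∑ i, A i k * P i y)) x)
            - Δt * deriv (deriv p) x * g k) →
      ∀ Q' : Fin (s + 1) → ℝ → ℝ,
        (∀ (k : Fin (s + 1)) (x : ℝ),
          Q' k x = (1 / Δt) * ∑ i, (Aᵀ)⁻¹ k i * Qbar i x) →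
        (∀ (x : ℝ) (k : Fin (s + 1)),
          P k x = p x * (if k = Fin.last s then (1 : ℝ) else 0)
              + Δt * deriv (fun y => ∑ i, A i k * Q' i y) x
              - Δt * (deriv (deriv (fun y => ∑ i, Atil i k * P i y)) x
                  - deriv (deriv (fun y => ∑ i, A i k * P i y)) x)
              - Δt * deriv (deriv p) x * g k
          ∧ (0 : ℝ)
            = -(Δt * ((∑ i, A i k * Q' i x)
                  - deriv (fun y => ∑ i, Atil i k * P i y) x))
              + Δt * deriv p x * g k)) := by
  refine ⟨fun h x k => ?_, fun Qbar hQbar h Q' hQ' x k => ?_⟩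
  · obtain ⟨hP_eq, hQ_eq⟩ := h x k
    have hAQ : Differentiable ℝ (fun y => ∑ i, A i k * Q i y) :=
      Differentiable.fun_sum fun i _ => (hQ i).const_mul _
    refine ⟨by linarith, ?_⟩
    rwa [deriv_const_mul Δt (hAQ x)]
  · obtain ⟨hQbar_eq, hP_eq⟩ := h x k
    have hAQ' : ∀ y, ∑ i, A i k * Q' i y = 1 / Δt * Qbar k y := fun y =>
      sum_mul_eq_of_eq_const_mul_inv_transpose_mulVec hA _ _ _ (fun i => hQ' i y) k
    have hderiv : deriv (fun y => ∑ i, A i k * Q' i y) x = 1 / Δt * deriv (Qbar k) x := by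
      simp only [hAQ']
      exact deriv_const_mul _ (hQbar k x)
    rw [hderiv, hAQ' x]
    constructor
    · rw [hP_eq, ← mul_assoc, mul_one_div_cancel hΔt.ne', one_mul]
    · rw [hQbar_eq]
      field_simp
      ring

/-- The variable transformation `Q̄ = Δt AᵀQ` maps solutions of the
`ε = 0` limit of the semi-discrete adjoint equations onto solutions of the adjoint
system of the limiting heat-equation control problem, and conversely
`Q = (1/Δt)(Aᵀ)⁻¹ Q̄` maps solutions back. -/
theorem adjoint_variable_transformation_equiv
    (s : ℕ) (Δt : ℝ) (hΔt : 0 < Δt)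
    (Atil A : Matrix (Fin (s + 1)) (Fin (s + 1)) ℝ) (hA : IsUnit A)
    (btil : Fin (s + 1) → ℝ)
    (g : Fin (s + 1) → ℝ) (hg : ∀ j, g j = btil j - Atil (Fin.last s) j)
    (p : ℝ → ℝ) (hp : Differentiable ℝ p) (hp' : Differentiable ℝ (deriv p))
    (P Q : Fin (s + 1) → ℝ → ℝ)
    (hP : ∀ k, Differentiable ℝ (P k))
    (hP' : ∀ k, Differentiable ℝ (deriv (P k)))
    (hQ : ∀ k, Differentiable ℝ (Q k)) :
    -- forward direction: `(P, Q)` solves the ε = 0 limit adjoint stage equations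
    -- implies `(P, Q̄)` with `Q̄ = Δt AᵀQ` solves the adjoint system of the
    -- limiting problem
    ((∀ (x : ℝ) (k : Fin (s + 1)),
        P k x = p x * (if k = Fin.last s then (1 : ℝ) else 0)
            + Δt * deriv (fun y => ∑ i, A i k * Q i y) x
            - Δt * (deriv (deriv (fun y => ∑ i, Atil i k * P i y)) x
                - deriv (deriv (fun y => ∑ i, A i k * P i y)) x)
            - Δt * deriv (deriv p) x * g k
        ∧ (0 : ℝ)
          = -(Δt * ((∑ i, A i k * Q i x)
                - deriv (fun y => ∑ i, Atil i k * P i y) x))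
            + Δt * deriv p x * g k) →
      (∀ (x : ℝ) (k : Fin (s + 1)),
        Δt * ∑ i, A i k * Q i x
            = Δt * deriv (fun y => ∑ i, Atil i k * P i y) x
              + Δt * deriv p x * g k
        ∧ P k x = p x * (if k = Fin.last s then (1 : ℝ) else 0)
            + deriv (fun y => Δt * ∑ i, A i k * Q i y) x
            - Δt * (deriv (deriv (fun y => ∑ i, Atil i k * P i y)) x
                - deriv (deriv (fun y => ∑ i, A i k * P i y)) x)
            - Δt * deriv (deriv p) x * g k))
    ∧
    -- converse direction: if `(P, Q̄)` solves the limiting adjoint system, then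
    -- `Q = (1/Δt)(Aᵀ)⁻¹ Q̄` solves the ε = 0 limit adjoint stage equations
    (∀ Qbar : Fin (s + 1) → ℝ → ℝ, (∀ k, Differentiable ℝ (Qbar k)) →
      (∀ (x : ℝ) (k : Fin (s + 1)),
        Qbar k x
            = Δt * deriv (fun y => ∑ i, Atil i k * P i y) x
              + Δt * deriv p x * g k
        ∧ P k x = p x * (if k = Fin.last s then (1 : ℝ) else 0)
            + deriv (fun y => Qbar k y) x
            - Δt * (deriv (deriv (fun y => ∑ i, Atil i k * P i y)) x
                - deriv (deriv (fun y => ∑ i, A i k * P i y)) x)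
            - Δt * deriv (deriv p) x * g k) →
      ∀ Q' : Fin (s + 1) → ℝ → ℝ,
        (∀ (k : Fin (s + 1)) (x : ℝ),
          Q' k x = (1 / Δt) * ∑ i, (Aᵀ)⁻¹ k i * Qbar i x) →
        (∀ (x : ℝ) (k : Fin (s + 1)),
          P k x = p x * (if k = Fin.last s then (1 : ℝ) else 0)
              + Δt * deriv (fun y => ∑ i, A i k * Q' i y) x
              - Δt * (deriv (deriv (fun y => ∑ i, Atil i k * P i y)) x
                  - deriv (deriv (fun y => ∑ i, A i k * P i y)) x)
              - Δt * deriv (deriv p) x * g k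
          ∧ (0 : ℝ)
            = -(Δt * ((∑ i, A i k * Q' i x)
                  - deriv (fun y => ∑ i, Atil i k * P i y) x))
              + Δt * deriv p x * g k)) :=
  adjoint_variable_transformation_equiv_general s Δt hΔt Atil A hA g p P Q hQ
end
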